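/- Let L be a fixed even integer with L ≥ 6, let n ≥ 1, and let μ be a probability measure on ℝ^n satisfying Condition H(n). Let W = (W_k, k ∈ ℤ) and Y = (Y_k, k ∈ ℤ) be random sequences with laws D(n, μ) and D(Ln, θ(μ)) respectively. Then the family (W_k, k ∈ ℤ) is (L−1)-tuplewise independent and each W_k has law λ_unps3, and likewise the family (Y_k, k ∈ ℤ) is (L−1)-tuplewise independent and each Y_k has law λ_unps3. -/

import Mathlib

open MeasureTheory ProbabilityTheory Filter Topology
open scoped ENNReal NNReal

noncomputable section

/-- `λ_unps3`: the uniform distribution on the interval `[-√3, √3]`. -/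
def lambdaUnps3 : Measure ℝ :=
  (ENNReal.ofReal (2 * Real.sqrt 3))⁻¹ •
    (volume.restrict (Set.Icc (-(Real.sqrt 3)) (Real.sqrt 3)))

/-- A family of real random variables is `m`-tuplewise independent if every subfamily
indexed by a set of cardinality between 2 and `m` is independent. -/
def TuplewiseIndep {Ω ι : Type*} [MeasurableSpace Ω] (P : Measure Ω) (m : ℕ)
    (X : ι → Ω → ℝ) : Prop :=
  ∀ S : Finset ι, 2 ≤ S.card → S.card ≤ m →
    iIndepFun
      (fun i : {i // i ∈ S} => X i) P

/-- The map `φ_n : ℝ^n → ℝ^n`. -/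
def phi (n : ℕ) (x : Fin n → ℝ) : Fin n → ℝ :=
  if 0 < ∑ i, x i then x else if (∑ i, x i) = 0 then 0 else -x

/-- Splicing `L` blocks of length `n` into one vector of length `L * n`:
block `ℓ` occupies coordinates `ℓ*n, …, ℓ*n + n - 1`. -/
def splice {L n : ℕ} (x : Fin L → Fin n → ℝ) : Fin (L * n) → ℝ :=
  fun k => x (finProdFinEquiv.symm k).1 (finProdFinEquiv.symm k).2

/-- The map `ψ_{n,j} : ℝ^{Ln} → ℝ^{Ln}`: if the product of the block sums is positive,
multiply block `j` by `-1`; otherwise do nothing. -/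
def psi (L n : ℕ) (j : Fin L) (y : Fin (L * n) → ℝ) : Fin (L * n) → ℝ :=
  if 0 < ∏ ℓ : Fin L, ∑ i : Fin n, y (finProdFinEquiv (ℓ, i)) then
    fun k => if (finProdFinEquiv.symm k).1 = j then -y k else y k
  else y

/-- The set `Υ = {x ∈ {-1,1}^L : ∏ i, x i = -1}`. -/
def Upsilon (L : ℕ) : Set (Fin L → ℝ) :=
  {x | (∀ i, x i = 1 ∨ x i = -1) ∧ ∏ i, x i = -1}

/-- `ν`: the uniform distribution on `Υ`, i.e. `ν({x}) = 2^{-(L-1)}` for `x ∈ Υ`. -/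
def nuL (L : ℕ) : Measure (Fin L → ℝ) :=
  ((2 : ℝ≥0∞) ^ (L - 1))⁻¹ • (Measure.count.restrict (Upsilon L))

/-- `θ(μ)`: the law on `ℝ^{Ln}` of `⟨V_0 φ_n(W^(0)) | ⋯ | V_{L-1} φ_n(W^(L-1))⟩`,
where `W^(0), …, W^(L-1)` are i.i.d. with law `μ` and `V ~ ν` is independent of them. -/
def theta (L n : ℕ) (μ : Measure (Fin n → ℝ)) : Measure (Fin (L * n) → ℝ) :=
  Measure.map
    (fun p : (Fin L → ℝ) × (Fin L → (Fin n → ℝ)) =>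
      splice (fun ℓ => p.1 ℓ • phi n (p.2 ℓ)))
    ((nuL L).prod (Measure.pi fun _ : Fin L => μ))

/-- Condition `H(n)` for a probability measure `μ` on `ℝ^n` (with parameter `L`). -/
structure CondH (L n : ℕ) (μ : Measure (Fin n → ℝ)) : Prop where
  abs_cont : μ ≪ volume
  marginal : ∀ k : Fin n, Measure.map (fun x => x k) μ = lambdaUnps3
  tuplewise : TuplewiseIndep μ (L - 1) (fun k (x : Fin n → ℝ) => x k)
  abs_indep : 2 ≤ n → iIndepFun
      (fun k (x : Fin n → ℝ) => |x k|) μ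
  neg_inv : Measure.map (fun x => -x) μ = μ
  perm : ∀ j : Fin n, ∃ σ : Equiv.Perm (Fin n),
      σ ⟨0, j.pos⟩ = j ∧ Measure.map (fun x => x ∘ σ) μ = μ
  prod_nonpos : L ≤ n → ∀ S : Finset (Fin n), S.card = L →
      (∫ x, ∏ i ∈ S, x i ∂μ) ≤ 0

/-- The recursively defined measures `μ_n` on `ℝ^{L^n}`:
`μ_0 = λ_unps3` and `μ_{n+1} = θ(μ_n)`. -/
def muSeq (L : ℕ) : (n : ℕ) → Measure (Fin (L ^ n) → ℝ)
  | 0 => Measure.map (fun x : ℝ => fun _ : Fin (L ^ 0) => x) lambdaUnps3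
  | n + 1 =>
    Measure.map
      (fun (x : Fin (L * L ^ n) → ℝ) (k : Fin (L ^ (n + 1))) =>
        x (Fin.cast (show L ^ (n + 1) = L * L ^ n by rw [pow_succ, Nat.mul_comm]) k))
      (theta L (L ^ n) (muSeq L n))

/-- `W = (W_k, k ∈ ℤ)` has law `D(n, μ)`: the successive length-`n` blocks
`(W_{nu}, …, W_{nu+n-1})`, `u ∈ ℤ`, are independent and each has law `μ`. -/
def HasLawD {Ω : Type*} [MeasurableSpace Ω] (P : Measure Ω) (n : ℕ)
    (μ : Measure (Fin n → ℝ)) (W : ℤ → Ω → ℝ) : Prop :=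
  iIndepFun
      (fun (u : ℤ) (ω : Ω) => fun i : Fin n => W ((n : ℤ) * u + (i : ℤ)) ω) P ∧
    ∀ u : ℤ, Measure.map (fun ω => fun i : Fin n => W ((n : ℤ) * u + (i : ℤ)) ω) P = μ

/-- Strict stationarity of a sequence of real random variables indexed by `ℤ`. -/
def StrictlyStationary {Ω : Type*} [MeasurableSpace Ω] (P : Measure Ω)
    (X : ℤ → Ω → ℝ) : Prop :=
  ∀ (j ℓ : ℤ) (m : ℕ),
    Measure.map (fun ω => fun i : Fin (m + 1) => X (j + (i : ℤ)) ω) P =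
    Measure.map (fun ω => fun i : Fin (m + 1) => X (ℓ + (i : ℤ)) ω) P

/-- `J(n) = Σ_{u=1}^n L^{u-1} κ_u` (here `κ u` stands for the paper's `κ_{u+1}`). -/
def Jfun (L : ℕ) {Ω : Type*} (κ : ℕ → Ω → Fin L) (n : ℕ) (ω : Ω) : ℕ :=
  ∑ u ∈ Finset.range n, L ^ u * (κ u ω : ℕ)

end
section Aux

open MeasureTheory ProbabilityTheory Set
open scoped ENNReal

variable {L : ℕ}

lemma lambdaUnps3_univ : lambdaUnps3 Set.univ = 1 := by
  have h3 : (0:ℝ) < Real.sqrt 3 := Real.sqrt_pos.mpr (by norm_num)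
  simp only [lambdaUnps3, Measure.smul_apply, Measure.restrict_apply MeasurableSet.univ,
    Set.univ_inter, Real.volume_Icc, smul_eq_mul]
  rw [show Real.sqrt 3 - -(Real.sqrt 3) = 2 * Real.sqrt 3 by ring]
  exact ENNReal.inv_mul_cancel (by rw [Ne, ENNReal.ofReal_eq_zero]; push_neg; positivity)
    ENNReal.ofReal_ne_top

/-- Box probability property for a measure on `ℝ^m`. -/
def BoxProp (L m : ℕ) (μ' : Measure (Fin m → ℝ)) : Prop :=
  ∀ T : Finset (Fin m), T.card ≤ L - 1 → ∀ A : Fin m → Set ℝ,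
    (∀ i ∈ T, MeasurableSet (A i)) →
    μ' {z | ∀ i ∈ T, z i ∈ A i} = ∏ i ∈ T, lambdaUnps3 (A i)

/-- Box law property for a sequence. -/
def BoxLawSeq (L : ℕ) {Ω : Type*} [MeasurableSpace Ω] (P : Measure Ω)
    (X : ℤ → Ω → ℝ) : Prop :=
  ∀ F : Finset ℤ, F.card ≤ L - 1 → ∀ A : ℤ → Set ℝ, (∀ k ∈ F, MeasurableSet (A k)) →
    P (⋂ k ∈ F, X k ⁻¹' A k) = ∏ k ∈ F, lambdaUnps3 (A k)

lemma BoxLawSeq.marginal (hL : 6 ≤ L) {Ω : Type*} [MeasurableSpace Ω] {P : Measure Ω}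
    {X : ℤ → Ω → ℝ} (hX : ∀ k, Measurable (X k)) (h : BoxLawSeq L P X) (k : ℤ) :
    Measure.map (X k) P = lambdaUnps3 := by
  ext A hA
  rw [Measure.map_apply (hX k) hA]
  have := h {k} (by simp; omega) (fun _ => A) (fun _ _ => hA)
  simpa using this

lemma BoxLawSeq.tuplewise (hL : 6 ≤ L) {Ω : Type*} [MeasurableSpace Ω] {P : Measure Ω}
    {X : ℤ → Ω → ℝ} (hX : ∀ k, Measurable (X k)) (h : BoxLawSeq L P X) :
    TuplewiseIndep P (L - 1) X := by
  classical
  intro S h2 hcard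
  rw [iIndepFun_iff_measure_inter_preimage_eq_mul]
  intro F sets hsets
  set A : ℤ → Set ℝ := fun k =>
    if hk : k ∈ S then (if (⟨k, hk⟩ : {i // i ∈ S}) ∈ F then sets ⟨k, hk⟩ else Set.univ)
    else Set.univ with hA
  have hAi : ∀ i ∈ F, A ↑i = sets i := by
    intro i hi
    simp only [hA, dif_pos i.2, Subtype.coe_eta, if_pos hi]
  have hAmeas : ∀ k ∈ F.image (Subtype.val), MeasurableSet (A k) := by
    intro k hk
    obtain ⟨i, hi, rfl⟩ := Finset.mem_image.mp hk
    rw [hAi i hi]; exact hsets i hi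
  have hcard' : (F.image (Subtype.val)).card ≤ L - 1 := by
    calc (F.image (Subtype.val)).card ≤ F.card := Finset.card_image_le
      _ ≤ (Finset.univ : Finset {i // i ∈ S}).card := Finset.card_le_univ F
      _ = S.card := by simp [Finset.card_univ]
      _ ≤ L - 1 := hcard
  have hset : (⋂ k ∈ F.image (Subtype.val), X k ⁻¹' A k) = ⋂ i ∈ F, X ↑i ⁻¹' sets i := by
    ext ω
    simp only [Set.mem_iInter, Finset.mem_image, Set.mem_preimage]
    constructor
    · intro hmem i hi
      have := hmem ↑i ⟨i, hi, rfl⟩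
      rwa [hAi i hi] at this
    · rintro hmem k ⟨i, hi, rfl⟩
      rw [hAi i hi]; exact hmem i hi
  have hmarg : ∀ i : {i // i ∈ S}, ∀ B : Set ℝ, MeasurableSet B →
      P (X ↑i ⁻¹' B) = lambdaUnps3 B := by
    intro i B hB
    rw [← Measure.map_apply (hX ↑i) hB, h.marginal hL hX ↑i]
  calc P (⋂ i ∈ F, X ↑i ⁻¹' sets i) = P (⋂ k ∈ F.image (Subtype.val), X k ⁻¹' A k) := by
        rw [hset]
    _ = ∏ k ∈ F.image (Subtype.val), lambdaUnps3 (A k) := h _ hcard' A hAmeas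
    _ = ∏ i ∈ F, lambdaUnps3 (A ↑i) :=
        Finset.prod_image (fun i _ j _ hij => Subtype.val_injective hij)
    _ = ∏ i ∈ F, P (X ↑i ⁻¹' sets i) := by
        refine Finset.prod_congr rfl fun i hi => ?_
        rw [hAi i hi, hmarg i _ (hsets i hi)]

end Aux
section Aux2

open MeasureTheory ProbabilityTheory Set
open scoped ENNReal

variable {L : ℕ}

lemma boxProp_of_condH {n : ℕ} {μ : Measure (Fin n → ℝ)} [IsProbabilityMeasure μ]
    (hH : CondH L n μ) : BoxProp L n μ := by
  intro T hT A hA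
  rcases Nat.lt_or_ge T.card 2 with h2 | h2
  · have h01 : T.card = 0 ∨ T.card = 1 := by omega
    rcases h01 with h | h
    · rw [Finset.card_eq_zero] at h; subst h; simp
    · obtain ⟨i, rfl⟩ := Finset.card_eq_one.mp h
      have hs : {z : Fin n → ℝ | ∀ j ∈ ({i} : Finset (Fin n)), z j ∈ A j}
          = (fun z : Fin n → ℝ => z i) ⁻¹' A i := by ext z; simp
      rw [hs, ← Measure.map_apply (measurable_pi_apply i) (hA i (Finset.mem_singleton_self i)),
        hH.marginal i]
      simp
  · have hind := hH.tuplewise T h2 hT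
    have hkey := hind.measure_inter_preimage_eq_mul (S := Finset.univ)
      (sets := fun i : {x // x ∈ T} => A ↑i) (fun i _ => hA ↑i i.2)
    have hset : (⋂ i ∈ (Finset.univ : Finset {x // x ∈ T}),
        (fun x : Fin n → ℝ => x ↑i) ⁻¹' A ↑i) = {z | ∀ i ∈ T, z i ∈ A i} := by
      ext z
      simp [Subtype.forall]
    rw [hset] at hkey
    calc μ {z | ∀ i ∈ T, z i ∈ A i}
        = ∏ i : {x // x ∈ T}, μ ((fun x : Fin n → ℝ => x ↑i) ⁻¹' A ↑i) := by
          rw [hkey]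
      _ = ∏ i : {x // x ∈ T}, lambdaUnps3 (A ↑i) := by
          refine Finset.prod_congr rfl fun i _ => ?_
          rw [← Measure.map_apply (measurable_pi_apply (↑i : Fin n)) (hA _ i.2), hH.marginal]
      _ = ∏ i ∈ T, lambdaUnps3 (A i) := Finset.prod_coe_sort T (fun i => lambdaUnps3 (A i))

lemma boxLawSeq_of_hasLawD {m : ℕ} (hm : 0 < m) {μ' : Measure (Fin m → ℝ)}
    (hbox : BoxProp L m μ') {Ω : Type*} [MeasurableSpace Ω] {P : Measure Ω}
    [IsProbabilityMeasure P] {Y : ℤ → Ω → ℝ} (hYm : ∀ k, Measurable (Y k))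
    (hY : HasLawD P m μ' Y) : BoxLawSeq L P Y := by
  classical
  intro F hF A hA
  have hmz : (0:ℤ) < (m:ℤ) := by exact_mod_cast hm
  have hmz' : (m:ℤ) ≠ 0 := by omega
  set iOf : ℤ → Fin m := fun k => ⟨(k % (m:ℤ)).toNat, by
    have h1 := Int.emod_nonneg k hmz'
    have h2 := Int.emod_lt_of_pos k hmz
    omega⟩ with hiOf
  have hkey : ∀ k : ℤ, (m:ℤ) * (k / (m:ℤ)) + ((iOf k : ℕ) : ℤ) = k := by
    intro k
    have h1 := Int.emod_nonneg k hmz'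
    have h3 : ((iOf k : ℕ) : ℤ) = k % (m:ℤ) := Int.toNat_of_nonneg h1
    rw [h3]
    exact Int.mul_ediv_add_emod k (m:ℤ)
  set U := F.image (fun k => k / (m:ℤ)) with hU
  set B : ℤ → Set (Fin m → ℝ) := fun u =>
    ⋂ k ∈ F.filter (fun k => k / (m:ℤ) = u), (fun z : Fin m → ℝ => z (iOf k)) ⁻¹' A k with hB
  have hBmeas : ∀ u, MeasurableSet (B u) := by
    intro u
    refine MeasurableSet.biInter (Finset.countable_toSet _) fun k hk => ?_
    exact (measurable_pi_apply (iOf k)) (hA k (Finset.mem_of_mem_filter _ hk))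
  have hXmeas : ∀ u : ℤ, Measurable (fun ω : Ω => fun i : Fin m => Y ((m:ℤ) * u + (i:ℤ)) ω) :=
    fun u => measurable_pi_iff.mpr fun i => hYm _
  have hmul := hY.1.measure_inter_preimage_eq_mul (S := U) (sets := B) (fun u _ => hBmeas u)
  have hset : (⋂ u ∈ U, (fun ω : Ω => fun i : Fin m => Y ((m:ℤ) * u + (i:ℤ)) ω) ⁻¹' B u)
      = ⋂ k ∈ F, Y k ⁻¹' A k := by
    ext ω
    simp only [Set.mem_iInter, Set.mem_preimage, hB, hU, Finset.mem_image, Finset.mem_filter,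
      Set.mem_iInter]
    constructor
    · intro h k hk
      have := h (k / (m:ℤ)) ⟨k, hk, rfl⟩ k ⟨hk, rfl⟩
      rwa [hkey k] at this
    · rintro h u ⟨k', hk', rfl⟩ k ⟨hk, hku⟩
      rw [← hku, hkey k]
      exact h k hk
  have hblock : ∀ u ∈ U, P ((fun ω : Ω => fun i : Fin m => Y ((m:ℤ) * u + (i:ℤ)) ω) ⁻¹' B u)
      = μ' (B u) := by
    intro u _
    rw [← Measure.map_apply (hXmeas u) (hBmeas u), hY.2 u]
  have hfiber : ∀ u ∈ U, μ' (B u)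
      = ∏ k ∈ F.filter (fun k => k / (m:ℤ) = u), lambdaUnps3 (A k) := by
    intro u _
    set Fu := F.filter (fun k => k / (m:ℤ) = u) with hFu
    set A' : Fin m → Set ℝ := fun i => A ((m:ℤ) * u + ((i : ℕ) : ℤ)) with hA'
    have hAk : ∀ k : ℤ, k / (m:ℤ) = u → A' (iOf k) = A k := by
      intro k h1
      show A ((m:ℤ) * u + ((iOf k : ℕ) : ℤ)) = A k
      rw [← h1, hkey k]
    have hmemu : ∀ k ∈ Fu, k / (m:ℤ) = u := fun k hk => (Finset.mem_filter.mp hk).2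
    have hinj : ∀ k ∈ Fu, ∀ k' ∈ Fu, iOf k = iOf k' → k = k' := by
      intro k hk k' hk' he
      have e1 := hkey k
      rw [hmemu k hk] at e1
      have e2 := hkey k'
      rw [hmemu k' hk'] at e2
      rw [← e1, ← e2, he]
    set T := Fu.image iOf with hT
    have hBT : B u = {z | ∀ i ∈ T, z i ∈ A' i} := by
      ext z
      simp only [hB, ← hFu, Set.mem_iInter, Set.mem_preimage, Set.mem_setOf_eq, hT]
      constructor
      · intro h i hi
        obtain ⟨k, hk, rfl⟩ := Finset.mem_image.mp hi
        rw [hAk k (hmemu k hk)]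
        exact h k hk
      · intro h k hk
        have := h (iOf k) (Finset.mem_image_of_mem _ hk)
        rwa [hAk k (hmemu k hk)] at this
    have hcard : T.card ≤ L - 1 := by
      calc T.card ≤ Fu.card := Finset.card_image_le
        _ ≤ F.card := Finset.card_filter_le _ _
        _ ≤ L - 1 := hF
    have hA'meas : ∀ i ∈ T, MeasurableSet (A' i) := by
      intro i hi
      obtain ⟨k, hk, rfl⟩ := Finset.mem_image.mp hi
      rw [hAk k (hmemu k hk)]
      exact hA k (Finset.mem_of_mem_filter _ hk)
    rw [hBT, hbox T hcard A' hA'meas, hT, Finset.prod_image hinj]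
    exact Finset.prod_congr rfl fun k hk => by rw [hAk k (hmemu k hk)]
  calc P (⋂ k ∈ F, Y k ⁻¹' A k)
      = P (⋂ u ∈ U, (fun ω : Ω => fun i : Fin m => Y ((m:ℤ) * u + (i:ℤ)) ω) ⁻¹' B u) := by
        rw [hset]
    _ = ∏ u ∈ U, P ((fun ω : Ω => fun i : Fin m => Y ((m:ℤ) * u + (i:ℤ)) ω) ⁻¹' B u) := hmul
    _ = ∏ u ∈ U, ∏ k ∈ F.filter (fun k => k / (m:ℤ) = u), lambdaUnps3 (A k) :=
        Finset.prod_congr rfl fun u hu => by rw [hblock u hu, hfiber u hu]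
    _ = ∏ k ∈ F, lambdaUnps3 (A k) :=
        Finset.prod_fiberwise_of_maps_to (fun k hk => Finset.mem_image_of_mem _ hk) _

end Aux2
section Aux3

open MeasureTheory ProbabilityTheory Set
open scoped ENNReal

variable {L : ℕ}

/-- The finite set `Υ` as a `Finset`. -/
noncomputable def upsFinset (L : ℕ) : Finset (Fin L → ℝ) :=
  (Fintype.piFinset fun _ : Fin L => ({1, -1} : Finset ℝ)).filter (fun x => ∏ i, x i = -1)

lemma upsFinset_coe (L : ℕ) : (upsFinset L : Set (Fin L → ℝ)) = Upsilon L := by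
  ext x
  simp only [upsFinset, Finset.coe_filter, Set.mem_setOf_eq, Fintype.mem_piFinset,
    Finset.mem_insert, Finset.mem_singleton, Upsilon]

lemma measurableSet_upsilon (L : ℕ) : MeasurableSet (Upsilon L) := by
  rw [← upsFinset_coe]
  exact (upsFinset L).finite_toSet.measurableSet

lemma sum_upsFinset (G : Fin L → ℝ → ℝ≥0∞) (l0 : Fin L) (hG : G l0 1 = G l0 (-1)) :
    2 * ∑ v ∈ upsFinset L, ∏ ℓ, G ℓ (v ℓ) = ∏ ℓ, (G ℓ 1 + G ℓ (-1)) := by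
  classical
  set cube := Fintype.piFinset fun _ : Fin L => ({1, -1} : Finset ℝ) with hcube
  set flip : (Fin L → ℝ) → (Fin L → ℝ) := fun x => Function.update x l0 (-(x l0)) with hflip
  have hmemcube : ∀ x ∈ cube, flip x ∈ cube := by
    intro x hx
    rw [Fintype.mem_piFinset] at hx ⊢
    intro i
    by_cases hi : i = l0
    · subst hi
      simp only [hflip, Function.update_self]
      rcases (by simpa using hx i : x i = 1 ∨ x i = -1) with h | h <;> simp [h]
    · simpa [hflip, Function.update_of_ne hi] using hx i
  have hprodflip : ∀ x : Fin L → ℝ, ∏ i, flip x i = -∏ i, x i := by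
    intro x
    rw [hflip]
    simp only
    rw [Finset.prod_update_of_mem (Finset.mem_univ l0)]
    rw [← Finset.mul_prod_erase Finset.univ x (Finset.mem_univ l0), Finset.erase_eq]
    ring
  have hvalflip : ∀ x ∈ cube, ∏ ℓ, G ℓ (flip x ℓ) = ∏ ℓ, G ℓ (x ℓ) := by
    intro x hx
    refine Finset.prod_congr rfl fun ℓ _ => ?_
    by_cases hi : ℓ = l0
    · subst hi
      have hup : flip x ℓ = -(x ℓ) := by simp [hflip]
      rw [Fintype.mem_piFinset] at hx
      rcases (by simpa using hx ℓ : x ℓ = 1 ∨ x ℓ = -1) with h | h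
      · rw [hup, h]; exact hG.symm
      · rw [hup, h, neg_neg]; exact hG
    · simp [hflip, Function.update_of_ne hi]
  have hflipflip : ∀ x : Fin L → ℝ, flip (flip x) = x := by
    intro x
    funext i
    by_cases hi : i = l0
    · subst hi; simp [hflip]
    · simp [hflip, Function.update_of_ne hi]
  have hpm : ∀ x ∈ cube, ∏ i, x i = 1 ∨ ∏ i, x i = -1 := by
    intro x hx
    rw [Fintype.mem_piFinset] at hx
    refine Finset.prod_induction x (fun y => y = 1 ∨ y = -1) ?_ (Or.inl rfl) ?_
    · rintro a b (ha | ha) (hb | hb) <;> simp [ha, hb]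
    · intro i _
      simpa using hx i
  have hbij : ∑ v ∈ cube.filter (fun x => ¬ ∏ i, x i = -1), ∏ ℓ, G ℓ (v ℓ)
      = ∑ v ∈ upsFinset L, ∏ ℓ, G ℓ (v ℓ) := by
    refine Finset.sum_nbij' (fun x => flip x) (fun x => flip x) ?_ ?_ ?_ ?_ ?_
    · intro x hx
      rw [Finset.mem_filter] at hx
      rw [upsFinset, Finset.mem_filter]
      refine ⟨hmemcube x hx.1, ?_⟩
      rw [hprodflip]
      rcases hpm x hx.1 with h | h
      · rw [h]
      · exact absurd h hx.2
    · intro x hx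
      rw [upsFinset, Finset.mem_filter] at hx
      rw [Finset.mem_filter]
      refine ⟨hmemcube x hx.1, ?_⟩
      rw [hprodflip, hx.2]
      norm_num
    · intro x _; exact hflipflip x
    · intro x _; exact hflipflip x
    · intro x hx
      exact (hvalflip x (Finset.mem_filter.mp hx).1).symm
  have hups_eq : cube.filter (fun x => ∏ i, x i = -1) = upsFinset L := by
    rw [hcube, upsFinset]
  have hsplit : ∑ v ∈ cube, ∏ ℓ, G ℓ (v ℓ)
      = ∑ v ∈ upsFinset L, ∏ ℓ, G ℓ (v ℓ)
        + ∑ v ∈ cube.filter (fun x => ¬ ∏ i, x i = -1), ∏ ℓ, G ℓ (v ℓ) := by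
    rw [← Finset.sum_filter_add_sum_filter_not cube (fun x => ∏ i, x i = -1), hups_eq]
  have hcubeprod : ∑ v ∈ cube, ∏ ℓ, G ℓ (v ℓ) = ∏ ℓ, (G ℓ 1 + G ℓ (-1)) := by
    rw [← Finset.prod_univ_sum]
    refine Finset.prod_congr rfl fun ℓ _ => ?_
    rw [Finset.sum_pair (by norm_num : (1:ℝ) ≠ -1)]
  rw [two_mul, ← hcubeprod, hsplit, hbij]

lemma card_upsFinset_ennreal (hL : 0 < L) :
    ((upsFinset L).card : ℝ≥0∞) = 2 ^ (L - 1) := by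
  have h := sum_upsFinset (L := L) (fun _ _ => 1) ⟨0, hL⟩ rfl
  simp only [Finset.prod_const_one, Finset.sum_const, nsmul_eq_mul, mul_one] at h
  have h2 : ((1:ℝ≥0∞) + 1) = 2 := by norm_num
  rw [h2, Finset.prod_const, Finset.card_univ, Fintype.card_fin] at h
  have hpow : (2:ℝ≥0∞) ^ L = 2 * 2 ^ (L - 1) := by
    rw [← pow_succ']
    congr 1
    omega
  rw [hpow] at h
  exact (ENNReal.mul_right_inj (by norm_num) (by norm_num)).mp h

end Aux3
section Aux4

open MeasureTheory ProbabilityTheory Set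
open scoped ENNReal

variable {L : ℕ}

lemma lintegral_nuL (f : (Fin L → ℝ) → ℝ≥0∞) :
    ∫⁻ v, f v ∂(nuL L) = ((2:ℝ≥0∞) ^ (L - 1))⁻¹ * ∑ x ∈ upsFinset L, f x := by
  rw [nuL, lintegral_smul_measure]
  congr 1
  have hmeas := measurableSet_upsilon L
  rw [← lintegral_indicator hmeas, lintegral_count]
  rw [tsum_eq_sum (s := upsFinset L) (fun b hb => by
    apply Set.indicator_of_notMem
    rw [← upsFinset_coe] at *
    exact fun hmem => hb (by exact_mod_cast hmem))]
  refine Finset.sum_congr rfl fun x hx => ?_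
  apply Set.indicator_of_mem
  rw [← upsFinset_coe]
  exact_mod_cast hx

lemma nuL_isProbability (hL : 0 < L) : IsProbabilityMeasure (nuL L) := by
  constructor
  rw [← MeasureTheory.lintegral_one, lintegral_nuL]
  simp only [Finset.sum_const, nsmul_eq_mul, mul_one]
  rw [card_upsFinset_ennreal hL]
  exact ENNReal.inv_mul_cancel (by positivity) (by simp)

lemma volume_sumZero (n : ℕ) (hn : 0 < n) :
    (volume : Measure (Fin n → ℝ)) {z : Fin n → ℝ | ∑ i, z i = 0} = 0 := by
  set f : (Fin n → ℝ) →ₗ[ℝ] ℝ := ∑ i : Fin n, LinearMap.proj i with hf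
  have hker : {z : Fin n → ℝ | ∑ i, z i = 0} = (LinearMap.ker f : Set (Fin n → ℝ)) := by
    ext z
    simp [hf, LinearMap.mem_ker, LinearMap.sum_apply, LinearMap.proj_apply]
  have hne : LinearMap.ker f ≠ ⊤ := by
    intro h
    have hz := LinearMap.ker_eq_top.mp h
    have : f (fun _ => (1:ℝ)) = 0 := by rw [hz]; rfl
    rw [hf] at this
    simp [LinearMap.sum_apply, LinearMap.proj_apply] at this
    omega
  rw [hker]
  exact Measure.addHaar_submodule volume _ hne

lemma measurable_phi (n : ℕ) : Measurable (phi n) := by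
  have hsum : Measurable fun x : Fin n → ℝ => ∑ i, x i :=
    Finset.measurable_sum _ fun i _ => measurable_pi_apply i
  unfold phi
  refine Measurable.ite (measurableSet_lt measurable_const hsum) measurable_id ?_
  exact Measurable.ite (hsum (measurableSet_singleton 0)) measurable_const measurable_id.neg

lemma phi_of_pos {n : ℕ} {x : Fin n → ℝ} (h : 0 < ∑ i, x i) : phi n x = x := if_pos h

lemma phi_of_neg {n : ℕ} {x : Fin n → ℝ} (h : ∑ i, x i < 0) : phi n x = -x := by
  rw [phi, if_neg (by linarith), if_neg (by linarith)]

lemma addG {n : ℕ} (hn : 0 < n) {μ : Measure (Fin n → ℝ)} [IsProbabilityMeasure μ]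
    (hH : CondH L n μ) (T' : Finset (Fin n)) (hT' : T'.card ≤ L - 1)
    (A : Fin n → Set ℝ) (hA : ∀ i ∈ T', MeasurableSet (A i)) :
    μ {z | ∀ i ∈ T', (1:ℝ) * phi n z i ∈ A i} + μ {z | ∀ i ∈ T', (-1:ℝ) * phi n z i ∈ A i}
      = 2 * ∏ i ∈ T', lambdaUnps3 (A i) := by
  set D : Set (Fin n → ℝ) := {z | ∀ i ∈ T', z i ∈ A i} with hD
  set N : Set (Fin n → ℝ) := {z | ∀ i ∈ T', -(z i) ∈ A i} with hN
  have hDmeas : MeasurableSet D := by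
    have hDe : D = ⋂ i ∈ T', (fun z : Fin n → ℝ => z i) ⁻¹' A i := by ext z; simp [hD]
    rw [hDe]
    exact MeasurableSet.biInter (Finset.countable_toSet T') fun i hi =>
      (measurable_pi_apply i) (hA i hi)
  have hNmeas : MeasurableSet N := by
    have hNe : N = ⋂ i ∈ T', (fun z : Fin n → ℝ => -(z i)) ⁻¹' A i := by ext z; simp [hN]
    rw [hNe]
    exact MeasurableSet.biInter (Finset.countable_toSet T') fun i hi =>
      ((measurable_pi_apply i).neg) (hA i hi)
  set Pos : Set (Fin n → ℝ) := {z | 0 < ∑ i, z i} with hPos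
  set Negs : Set (Fin n → ℝ) := {z | ∑ i, z i < 0} with hNegs
  have hsum : Measurable fun x : Fin n → ℝ => ∑ i, x i :=
    Finset.measurable_sum _ fun i _ => measurable_pi_apply i
  have hPosMeas : MeasurableSet Pos := measurableSet_lt measurable_const hsum
  have hNegsMeas : MeasurableSet Negs := measurableSet_lt hsum measurable_const
  have hZero : μ ({z : Fin n → ℝ | ∑ i, z i = 0}) = 0 :=
    hH.abs_cont (volume_sumZero n hn)
  have hsplit : ∀ s : Set (Fin n → ℝ), MeasurableSet s → μ s = μ (s ∩ Pos) + μ (s ∩ Negs) := by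
    intro s hs
    have h1 : μ s = μ (s ∩ (Pos ∪ Negs)) + μ (s \ (Pos ∪ Negs)) :=
      (measure_inter_add_diff s (hPosMeas.union hNegsMeas)).symm
    have h2 : μ (s \ (Pos ∪ Negs)) = 0 := by
      refine measure_mono_null ?_ hZero
      intro z hz
      simp only [Set.mem_diff, Set.mem_union, hPos, hNegs, Set.mem_setOf_eq, not_or, not_lt] at hz
      simp only [Set.mem_setOf_eq]
      linarith [hz.2.1, hz.2.2]
    rw [h1, h2, add_zero, Set.inter_union_distrib_left]
    refine measure_union ?_ (hs.inter hNegsMeas)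
    exact Set.disjoint_left.mpr fun z hz1 hz2 => by
      have := hz1.2; have := hz2.2
      simp only [hPos, hNegs, Set.mem_setOf_eq] at *
      linarith
  set C1 : Set (Fin n → ℝ) := {z | ∀ i ∈ T', (1:ℝ) * phi n z i ∈ A i} with hC1
  set C2 : Set (Fin n → ℝ) := {z | ∀ i ∈ T', (-1:ℝ) * phi n z i ∈ A i} with hC2
  have hC1meas : MeasurableSet C1 := by
    have hCe : C1 = ⋂ i ∈ T', (fun z : Fin n → ℝ => (1:ℝ) * phi n z i) ⁻¹' A i := by
      ext z; simp only [hC1, Set.mem_setOf_eq, Set.mem_iInter, Set.mem_preimage]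
    rw [hCe]
    exact MeasurableSet.biInter (Finset.countable_toSet T') fun i hi =>
      (measurable_const.mul ((measurable_pi_apply i).comp (measurable_phi n))) (hA i hi)
  have hC2meas : MeasurableSet C2 := by
    have hCe : C2 = ⋂ i ∈ T', (fun z : Fin n → ℝ => (-1:ℝ) * phi n z i) ⁻¹' A i := by
      ext z; simp only [hC2, Set.mem_setOf_eq, Set.mem_iInter, Set.mem_preimage]
    rw [hCe]
    exact MeasurableSet.biInter (Finset.countable_toSet T') fun i hi =>
      (measurable_const.mul ((measurable_pi_apply i).comp (measurable_phi n))) (hA i hi)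
  have e1 : C1 ∩ Pos = D ∩ Pos := by
    ext z
    simp only [hC1, hD, hPos, Set.mem_inter_iff, Set.mem_setOf_eq, and_congr_left_iff]
    intro hz
    rw [phi_of_pos hz]
    simp
  have e2 : C1 ∩ Negs = N ∩ Negs := by
    ext z
    simp only [hC1, hN, hNegs, Set.mem_inter_iff, Set.mem_setOf_eq, and_congr_left_iff]
    intro hz
    rw [phi_of_neg hz]
    simp
  have e3 : C2 ∩ Pos = N ∩ Pos := by
    ext z
    simp only [hC2, hN, hPos, Set.mem_inter_iff, Set.mem_setOf_eq, and_congr_left_iff]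
    intro hz
    rw [phi_of_pos hz]
    simp [neg_one_mul]
  have e4 : C2 ∩ Negs = D ∩ Negs := by
    ext z
    simp only [hC2, hD, hNegs, Set.mem_inter_iff, Set.mem_setOf_eq, and_congr_left_iff]
    intro hz
    rw [phi_of_neg hz]
    simp [neg_one_mul]
  have hNeq : μ N = μ D := by
    have : N = (fun z : Fin n → ℝ => -z) ⁻¹' D := by
      ext z
      simp [hN, hD, Pi.neg_apply]
    rw [this, ← Measure.map_apply measurable_neg hDmeas, hH.neg_inv]
  have hmuD : μ D = ∏ i ∈ T', lambdaUnps3 (A i) := boxProp_of_condH hH T' hT' A hA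
  calc μ C1 + μ C2 = (μ (C1 ∩ Pos) + μ (C1 ∩ Negs)) + (μ (C2 ∩ Pos) + μ (C2 ∩ Negs)) := by
        rw [← hsplit C1 hC1meas, ← hsplit C2 hC2meas]
    _ = (μ (D ∩ Pos) + μ (D ∩ Negs)) + (μ (N ∩ Pos) + μ (N ∩ Negs)) := by
        rw [e1, e2, e3, e4]; ring
    _ = μ D + μ N := by rw [← hsplit D hDmeas, ← hsplit N hNmeas]
    _ = 2 * ∏ i ∈ T', lambdaUnps3 (A i) := by rw [hNeq, hmuD, two_mul]

end Aux4
section Aux5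

open MeasureTheory ProbabilityTheory Set
open scoped ENNReal

variable {L : ℕ}

lemma boxProp_theta {n : ℕ} (hn : 0 < n) (hL : 6 ≤ L) {μ : Measure (Fin n → ℝ)}
    [IsProbabilityMeasure μ] (hH : CondH L n μ) : BoxProp L (L * n) (theta L n μ) := by
  classical
  intro T hT A hA
  have hL0 : 0 < L := by omega
  haveI := nuL_isProbability (L := L) hL0
  set q : Fin (L * n) → Fin L × Fin n := fun k => finProdFinEquiv.symm k with hq
  set E : Set (Fin (L * n) → ℝ) := {z | ∀ i ∈ T, z i ∈ A i} with hE
  have hEmeas : MeasurableSet E := by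
    have hEe : E = ⋂ k ∈ T, (fun y : Fin (L*n) → ℝ => y k) ⁻¹' A k := by ext y; simp [hE]
    rw [hEe]
    exact MeasurableSet.biInter (Finset.countable_toSet T) fun k hk =>
      (measurable_pi_apply k) (hA k hk)
  have hphi := measurable_phi n
  have hf : Measurable (fun p : (Fin L → ℝ) × (Fin L → (Fin n → ℝ)) =>
      splice (fun ℓ => p.1 ℓ • phi n (p.2 ℓ))) := by
    refine measurable_pi_iff.mpr fun k => ?_
    have heq : (fun p : (Fin L → ℝ) × (Fin L → (Fin n → ℝ)) =>
        splice (fun ℓ => p.1 ℓ • phi n (p.2 ℓ)) k)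
        = fun p : (Fin L → ℝ) × (Fin L → (Fin n → ℝ)) =>
            p.1 (q k).1 * phi n (p.2 (q k).1) ((q k).2) := rfl
    rw [heq]
    exact (((measurable_pi_apply _).comp measurable_fst)).mul
      ((measurable_pi_apply _).comp (hphi.comp ((measurable_pi_apply _).comp measurable_snd)))
  simp only [theta]
  rw [Measure.map_apply hf hEmeas]
  set C : Fin L → ℝ → Set (Fin n → ℝ) := fun ℓ s =>
    {z : Fin n → ℝ | ∀ k ∈ T.filter (fun k => (q k).1 = ℓ), s * phi n z ((q k).2) ∈ A k} with hC
  have hpre : ∀ v : Fin L → ℝ,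
      (Prod.mk v ⁻¹' ((fun p : (Fin L → ℝ) × (Fin L → (Fin n → ℝ)) =>
        splice (fun ℓ => p.1 ℓ • phi n (p.2 ℓ))) ⁻¹' E))
      = Set.pi Set.univ (fun ℓ => C ℓ (v ℓ)) := by
    intro v
    ext w
    simp only [Set.mem_preimage, hE, Set.mem_setOf_eq, Set.mem_pi, Set.mem_univ,
      forall_true_left, hC, Finset.mem_filter]
    constructor
    · rintro h ℓ k ⟨hk, hq1⟩
      subst hq1
      exact h k hk
    · intro h k hk
      exact h (q k).1 k ⟨hk, rfl⟩
  rw [Measure.prod_apply (hf hEmeas)]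
  have hstep1 : ∫⁻ v, (Measure.pi fun _ : Fin L => μ)
      (Prod.mk v ⁻¹' ((fun p : (Fin L → ℝ) × (Fin L → (Fin n → ℝ)) =>
        splice (fun ℓ => p.1 ℓ • phi n (p.2 ℓ))) ⁻¹' E)) ∂(nuL L)
      = ∫⁻ v, ∏ ℓ, μ (C ℓ (v ℓ)) ∂(nuL L) :=
    lintegral_congr fun v => by rw [hpre v, Measure.pi_pi]
  rw [hstep1, lintegral_nuL]
  obtain ⟨l0, hl0⟩ : ∃ l0 : Fin L, ∀ k ∈ T, (q k).1 ≠ l0 := by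
    by_contra hcon
    push_neg at hcon
    have hsub : (Finset.univ : Finset (Fin L)) ⊆ T.image (fun k => (q k).1) := by
      intro ℓ _
      obtain ⟨k, hk, he⟩ := hcon ℓ
      exact Finset.mem_image.mpr ⟨k, hk, he⟩
    have h1 := Finset.card_le_card hsub
    have h2 := Finset.card_image_le (s := T) (f := fun k => (q k).1)
    rw [Finset.card_univ, Fintype.card_fin] at h1
    omega
  have hCl0 : ∀ s : ℝ, C l0 s = Set.univ := by
    intro s
    ext z
    simp only [hC, Set.mem_setOf_eq, Finset.mem_filter, Set.mem_univ, iff_true]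
    rintro k ⟨hk, h1⟩
    exact absurd h1 (hl0 k hk)
  have hkey2 : ∑ x ∈ upsFinset L, ∏ ℓ, μ (C ℓ (x ℓ))
      = 2⁻¹ * ∏ ℓ, (μ (C ℓ 1) + μ (C ℓ (-1))) := by
    have h := sum_upsFinset (fun ℓ s => μ (C ℓ s)) l0 (by simp [hCl0])
    rw [← h, ← mul_assoc, ENNReal.inv_mul_cancel two_ne_zero (by norm_num), one_mul]
  have hGsum : ∀ ℓ : Fin L, μ (C ℓ 1) + μ (C ℓ (-1))
      = 2 * ∏ k ∈ T.filter (fun k => (q k).1 = ℓ), lambdaUnps3 (A k) := by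
    intro ℓ
    set Tl := T.filter (fun k => (q k).1 = ℓ) with hTl
    set T' := Tl.image (fun k => (q k).2) with hT'
    set A' : Fin n → Set ℝ := fun i => A (finProdFinEquiv (ℓ, i)) with hA'
    have hqk : ∀ k ∈ Tl, finProdFinEquiv (ℓ, (q k).2) = k := by
      intro k hk
      have h1 : (q k).1 = ℓ := (Finset.mem_filter.mp hk).2
      rw [← h1]
      have hpe : ((q k).1, (q k).2) = q k := rfl
      rw [hpe, hq]
      exact Equiv.apply_symm_apply _ _
    have hinj : ∀ k ∈ Tl, ∀ k' ∈ Tl, (q k).2 = (q k').2 → k = k' := by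
      intro k hk k' hk' he
      rw [← hqk k hk, he, hqk k' hk']
    have hCset : ∀ s : ℝ, C ℓ s = {z | ∀ i ∈ T', s * phi n z i ∈ A' i} := by
      intro s
      ext z
      simp only [hC, ← hTl, Set.mem_setOf_eq, hT']
      constructor
      · intro h i hi
        obtain ⟨k, hk, rfl⟩ := Finset.mem_image.mp hi
        rw [hA']
        simp only
        rw [hqk k hk]
        exact h k hk
      · intro h k hk
        have h2 := h ((q k).2) (Finset.mem_image_of_mem _ hk)
        rw [hA'] at h2
        simp only at h2
        rwa [hqk k hk] at h2
    have hcard' : T'.card ≤ L - 1 :=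
      le_trans (le_trans Finset.card_image_le (Finset.card_filter_le _ _)) hT
    have hA'meas : ∀ i ∈ T', MeasurableSet (A' i) := by
      intro i hi
      obtain ⟨k, hk, rfl⟩ := Finset.mem_image.mp hi
      rw [hA']
      simp only
      rw [hqk k hk]
      exact hA k (Finset.mem_of_mem_filter _ hk)
    have haddG := addG hn hH T' hcard' A' hA'meas
    rw [hCset 1, hCset (-1)]
    rw [haddG]
    congr 1
    rw [hT', Finset.prod_image hinj]
    refine Finset.prod_congr rfl fun k hk => ?_
    rw [hA']
    simp only
    rw [hqk k hk]
  rw [hkey2]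
  rw [Finset.prod_congr rfl (fun ℓ _ => hGsum ℓ), Finset.prod_mul_distrib,
    Finset.prod_const, Finset.card_univ, Fintype.card_fin]
  rw [Finset.prod_fiberwise_of_maps_to (fun k _ => Finset.mem_univ ((q k).1))
    (fun k => lambdaUnps3 (A k))]
  have hpow : (2:ℝ≥0∞) ^ L = 2 * 2 ^ (L - 1) := by
    rw [← pow_succ']
    congr 1
    omega
  rw [hpow]
  have harr : ((2:ℝ≥0∞) ^ (L - 1))⁻¹ * (2⁻¹ * (2 * 2 ^ (L - 1) * ∏ k ∈ T, lambdaUnps3 (A k)))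
      = (((2:ℝ≥0∞) ^ (L - 1))⁻¹ * 2 ^ (L - 1)) * ((2⁻¹ * 2) * ∏ k ∈ T, lambdaUnps3 (A k)) := by
    ring
  rw [harr, ENNReal.inv_mul_cancel (by positivity) (by simp),
    ENNReal.inv_mul_cancel two_ne_zero (by norm_num), one_mul, one_mul]

end Aux5

/-- Lemma 2.9(A): if `W` has law `D(n,μ)` and `Y` has law `D(Ln, θ(μ))` (for `μ` satisfying
Condition `H(n)`), then both families are `(L-1)`-tuplewise independent with `λ_unps3`
marginals. -/
theorem stmt14 (L : ℕ) (hLeven : Even L) (hL6 : 6 ≤ L) (n : ℕ) (hn : 1 ≤ n)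
    (μ : Measure (Fin n → ℝ)) [IsProbabilityMeasure μ] (hH : CondH L n μ)
    {Ω : Type*} [MeasurableSpace Ω] (P : Measure Ω) [IsProbabilityMeasure P]
    (W Y : ℤ → Ω → ℝ)
    (hWmeas : ∀ k, Measurable (W k)) (hYmeas : ∀ k, Measurable (Y k))
    (hW : HasLawD P n μ W) (hY : HasLawD P (L * n) (theta L n μ) Y) :
    (TuplewiseIndep P (L - 1) W ∧ ∀ k : ℤ, Measure.map (W k) P = lambdaUnps3) ∧
    (TuplewiseIndep P (L - 1) Y ∧ ∀ k : ℤ, Measure.map (Y k) P = lambdaUnps3) := by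
  have hbox1 : BoxProp L n μ := boxProp_of_condH hH
  have hseqW : BoxLawSeq L P W := boxLawSeq_of_hasLawD hn hbox1 hWmeas hW
  have hbox2 : BoxProp L (L * n) (theta L n μ) := boxProp_theta hn hL6 hH
  have hseqY : BoxLawSeq L P Y :=
    boxLawSeq_of_hasLawD (Nat.mul_pos (by omega) hn) hbox2 hYmeas hY
  exact ⟨⟨hseqW.tuplewise hL6 hWmeas, hseqW.marginal hL6 hWmeas⟩,
    ⟨hseqY.tuplewise hL6 hYmeas, hseqY.marginal hL6 hYmeas⟩⟩
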